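/- Let F be a linearly bounded filtration on R and v a valuation on R. For each m ∈ ℕ set λ_max^{(m)}(F_v; F) = max{λ > 0 : F^λ ⊄ F_v^m}, where F_v^μ = {f : v(f) ≥ μ}. Then the sequence m ↦ λ_max^{(m)}/m is superadditive in the sense that p · λ_max^{(m)} ≤ λ_max^{(pm)} for all positive integers p, m; consequently λ_max(F_v; F) = sup_m λ_max^{(m)}/m = lim_{m → ∞} λ_max^{(m)}/m. -/

import Mathlib

/-! If `f ∈ F^a \ F_v^j` and `g ∈ F^b \ F_v^k`, then `f g ∈ F^{a+b} \ F_v^{j+k}`, because `F` is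
multiplicative and `v` is additive on products. Hence `k ↦ λ_max^{(k)}` is superadditive, and
Fekete's lemma applies once `λ_max^{(k)}/k` is bounded, which is where `F^{Ck} ⊆ F_v^k` enters.
Every `λ` with `F^{λk} ⊄ F_v^k` satisfies `λ k ≤ λ_max^{(k)}`, so `λ_max` is the supremum of the
`λ_max^{(k)}/k`. -/

open scoped ENNReal
open Filter

/-- An `m`-filtration on `R`. -/
def IsMFiltration {R : Type*} [CommRing R] (m : Ideal R) (F : ℝ → Ideal R) : Prop :=
  (∀ l : ℝ, l ≤ 0 → F l = ⊤) ∧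
  (∀ l : ℝ, 0 < l → (F l).IsPrimary ∧ (F l).radical = m) ∧
  (∀ l μ : ℝ, l ≤ μ → F μ ≤ F l) ∧
  (∀ l : ℝ, 0 < l → ∃ ε : ℝ, 0 < ε ∧ ∀ μ : ℝ, l - ε < μ → μ ≤ l → F μ = F l) ∧
  (∀ l μ : ℝ, 0 ≤ l → 0 ≤ μ → F l * F μ ≤ F (l + μ))

/-- A valuation on `R` with values in `ℝ≥0∞` (valuations of the paper, with `v 0 = ∞`). -/
def IsValn {R : Type*} [CommRing R] (v : R → ℝ≥0∞) : Prop :=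
  v 0 = ⊤ ∧ v 1 = 0 ∧ (∀ f g : R, v (f * g) = v f + v g) ∧
  (∀ f g : R, min (v f) (v g) ≤ v (f + g))

/-- `F` is linearly bounded by `G`. -/
def LinBoundedBy {R : Type*} [CommRing R] (F G : ℝ → Ideal R) : Prop :=
  ∃ C : ℝ, 0 < C ∧ ∀ l : ℝ, 0 < l → F (C * l) ≤ G l

/-- `λ_max(G;F) = sup {λ > 0 : ∃ m, F^{λm} ⊄ G^m}`. -/
noncomputable def lamMax {R : Type*} [CommRing R] (G F : ℝ → Ideal R) : ℝ :=
  sSup {l : ℝ | 0 < l ∧ ∃ m : ℕ, ¬ F (l * m) ≤ G (m : ℝ)}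

section Superadditive

variable {L : ℕ → ℝ} (hL : ∀ j k : ℕ, 0 < j → 0 < k → L j + L k ≤ L (j + k))
include hL

theorem natCast_mul_le_of_superadditive {p k : ℕ} (hp : 0 < p) (hk : 0 < k) :
    (p : ℝ) * L k ≤ L (p * k) := by
  induction p, hp using Nat.le_induction with
  | base => simp
  | succ q hq ih =>
    calc ((q + 1 : ℕ) : ℝ) * L k = q * L k + L k := by push_cast; ring
      _ ≤ L (q * k) + L k := by linarith
      _ ≤ L (q * k + k) := hL _ _ (Nat.mul_pos hq hk) hk
      _ = L ((q + 1) * k) := by rw [Nat.succ_mul]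

theorem tendsto_div_csSup_of_superadditive
    (hbdd : BddAbove {x : ℝ | ∃ k : ℕ, 0 < k ∧ x = L k / k}) :
    Tendsto (fun k : ℕ => L k / k) atTop (nhds (sSup {x : ℝ | ∃ k : ℕ, 0 < k ∧ x = L k / k})) := by
  set T := {x : ℝ | ∃ k : ℕ, 0 < k ∧ x = L k / k}
  -- `u 0 = 0` makes `u` subadditive also at the index `0`, where `L` is unconstrained.
  set u : ℕ → ℝ := fun n => if n = 0 then 0 else -L n
  have hdiv : ∀ n, u n / n = -(L n / n) := by
    intro n
    rcases eq_or_ne n 0 with rfl | hn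
    · simp [u]
    · simp [u, hn, neg_div]
  have hu : Subadditive u := by
    intro a b
    rcases eq_or_ne a 0 with rfl | ha
    · simp [u]
    rcases eq_or_ne b 0 with rfl | hb
    · simp [u]
    simp only [u, ha, hb, Nat.add_eq_zero_iff, and_self, if_false]
    linarith [hL a b (Nat.pos_of_ne_zero ha) (Nat.pos_of_ne_zero hb)]
  obtain ⟨C, hC⟩ := hbdd
  have hu_bdd : BddBelow (Set.range fun n => u n / n) := by
    refine ⟨min (-C) 0, ?_⟩
    rintro _ ⟨n, rfl⟩
    rcases eq_or_ne n 0 with rfl | hn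
    · simp [u]
    · show min (-C) 0 ≤ u n / n
      rw [hdiv]
      linarith [min_le_left (-C) 0, hC ⟨n, Nat.pos_of_ne_zero hn, rfl⟩]
  have hlim : Tendsto (fun k : ℕ => L k / k) atTop (nhds (-hu.lim)) := by
    simpa [hdiv] using (hu.tendsto_lim hu_bdd).neg
  have hT : T.Nonempty := ⟨_, 1, one_pos, rfl⟩
  convert hlim using 2
  refine le_antisymm (csSup_le hT ?_) (le_of_tendsto hlim ?_)
  · rintro _ ⟨k, hk, rfl⟩
    linarith [hu.lim_le_div hu_bdd hk.ne', hdiv k]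
  · filter_upwards [eventually_gt_atTop 0] with k hk
    exact le_csSup ⟨C, hC⟩ ⟨k, hk, rfl⟩

end Superadditive

section Filtration

variable {R : Type*} [CommRing R] {F Fv : ℝ → Ideal R} {v : R → ℝ≥0∞}
  (hFv : ∀ (l : ℝ) (f : R), f ∈ Fv l ↔ ENNReal.ofReal l ≤ v f)
include hFv

theorem not_le_add_of_not_le (hFmul : ∀ l μ : ℝ, 0 ≤ l → 0 ≤ μ → F l * F μ ≤ F (l + μ))
    (hvmul : ∀ f g : R, v (f * g) = v f + v g) {a b s t : ℝ} (ha : 0 ≤ a) (hb : 0 ≤ b)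
    (has : ¬ F a ≤ Fv s) (hbt : ¬ F b ≤ Fv t) :
    ¬ F (a + b) ≤ Fv (s + t) := by
  obtain ⟨f, hfF, hfv⟩ := SetLike.not_le_iff_exists.mp has
  obtain ⟨g, hgF, hgv⟩ := SetLike.not_le_iff_exists.mp hbt
  rw [hFv, not_le] at hfv hgv
  refine SetLike.not_le_iff_exists.mpr ⟨f * g, hFmul a b ha hb (Ideal.mul_mem_mul hfF hgF), ?_⟩
  have hs : 0 ≤ s := (ENNReal.ofReal_pos.mp (pos_of_gt hfv)).le
  have ht : 0 ≤ t := (ENNReal.ofReal_pos.mp (pos_of_gt hgv)).le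
  rw [hFv, not_le, hvmul, ENNReal.ofReal_add hs ht]
  exact ENNReal.add_lt_add hfv hgv

theorem superadditive_of_isGreatest
    (hFmul : ∀ l μ : ℝ, 0 ≤ l → 0 ≤ μ → F l * F μ ≤ F (l + μ))
    (hvmul : ∀ f g : R, v (f * g) = v f + v g) {L : ℕ → ℝ}
    (hL : ∀ k : ℕ, 0 < k → IsGreatest {l : ℝ | 0 < l ∧ ¬ F l ≤ Fv (k : ℝ)} (L k))
    {j k : ℕ} (hj : 0 < j) (hk : 0 < k) : L j + L k ≤ L (j + k) := by
  obtain ⟨⟨hLj, hFj⟩, -⟩ := hL j hj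
  obtain ⟨⟨hLk, hFk⟩, -⟩ := hL k hk
  refine (hL (j + k) (by omega)).2 ⟨by positivity, ?_⟩
  rw [Nat.cast_add]
  exact not_le_add_of_not_le hFv hFmul hvmul hLj.le hLk.le hFj hFk

theorem lamMax_eq_csSup_of_isGreatest {L : ℕ → ℝ}
    (hL : ∀ k : ℕ, 0 < k → IsGreatest {l : ℝ | 0 < l ∧ ¬ F l ≤ Fv (k : ℝ)} (L k)) :
    lamMax Fv F = sSup {x : ℝ | ∃ k : ℕ, 0 < k ∧ x = L k / k} := by
  refine csSup_eq_csSup_of_forall_exists_le ?_ ?_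
  · rintro l ⟨hl, n, hn⟩
    have hn0 : 0 < n := by
      refine Nat.pos_of_ne_zero fun h => hn fun f _ => ?_
      simp [h, hFv]
    have hnR : (0 : ℝ) < n := Nat.cast_pos.mpr hn0
    exact ⟨L n / n, ⟨n, hn0, rfl⟩, (le_div_iff₀ hnR).mpr ((hL n hn0).2 ⟨by positivity, hn⟩)⟩
  · rintro _ ⟨k, hk, rfl⟩
    obtain ⟨⟨hLk, hFk⟩, -⟩ := hL k hk
    have hkR : (0 : ℝ) < k := Nat.cast_pos.mpr hk
    exact ⟨L k / k, ⟨by positivity, k, by rwa [div_mul_cancel₀ _ hkR.ne']⟩, le_rfl⟩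

end Filtration

theorem bddAbove_div_of_linBoundedBy {R : Type*} [CommRing R] {F G : ℝ → Ideal R}
    (hFmono : ∀ l μ : ℝ, l ≤ μ → F μ ≤ F l) (hbd : LinBoundedBy F G) {L : ℕ → ℝ}
    (hL : ∀ k : ℕ, 0 < k → L k ∈ {l : ℝ | 0 < l ∧ ¬ F l ≤ G (k : ℝ)}) :
    BddAbove {x : ℝ | ∃ k : ℕ, 0 < k ∧ x = L k / k} := by
  obtain ⟨C, -, hC⟩ := hbd
  refine ⟨C, ?_⟩
  rintro _ ⟨k, hk, rfl⟩
  have hkR : (0 : ℝ) < k := Nat.cast_pos.mpr hk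
  rw [div_le_iff₀ hkR]
  by_contra! hlt
  exact (hL k hk).2 ((hFmono _ _ hlt.le).trans (hC k hkR))

theorem stmt3_general {R : Type*} [CommRing R] (m : Ideal R)
    (F : ℝ → Ideal R) (hF : IsMFiltration m F)
    (v : R → ℝ≥0∞) (hv : IsValn v)
    (Fv : ℝ → Ideal R) (hFv : ∀ (l : ℝ) (f : R), f ∈ Fv l ↔ ENNReal.ofReal l ≤ v f)
    (hbd₁ : LinBoundedBy F Fv)
    (L : ℕ → ℝ)
    (hL : ∀ k : ℕ, 0 < k → IsGreatest {l : ℝ | 0 < l ∧ ¬ F l ≤ Fv (k : ℝ)} (L k)) :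
    (∀ p k : ℕ, 0 < p → 0 < k → (p : ℝ) * L k ≤ L (p * k)) ∧
    lamMax Fv F = sSup {x : ℝ | ∃ k : ℕ, 0 < k ∧ x = L k / k} ∧
    Tendsto (fun k : ℕ => L k / k) atTop (nhds (lamMax Fv F)) := by
  obtain ⟨-, -, hFmono, -, hFmul⟩ := hF
  have hsup : ∀ j k : ℕ, 0 < j → 0 < k → L j + L k ≤ L (j + k) := fun _ _ hj hk =>
    superadditive_of_isGreatest hFv hFmul hv.2.2.1 hL hj hk
  have hlamMax := lamMax_eq_csSup_of_isGreatest hFv hL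
  refine ⟨fun _ _ hp hk => natCast_mul_le_of_superadditive hsup hp hk, hlamMax, ?_⟩
  rw [hlamMax]
  exact tendsto_div_csSup_of_superadditive hsup
    (bddAbove_div_of_linBoundedBy hFmono hbd₁ fun k hk => (hL k hk).1)

/-- with `λ_max^{(m)}(F_v;F) = max {λ > 0 : F^λ ⊄ F_v^m}`, one has
`p·λ_max^{(m)} ≤ λ_max^{(pm)}`, and `λ_max(F_v;F) = sup_m λ_max^{(m)}/m = lim_m λ_max^{(m)}/m`. -/
theorem stmt3 {R : Type*} [CommRing R] [IsDomain R] (m : Ideal R) (hmax : m.IsMaximal)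
    (F : ℝ → Ideal R) (hF : IsMFiltration m F)
    (v : R → ℝ≥0∞) (hv : IsValn v)
    (Fv : ℝ → Ideal R) (hFv : ∀ (l : ℝ) (f : R), f ∈ Fv l ↔ ENNReal.ofReal l ≤ v f)
    (hFvFil : IsMFiltration m Fv)
    (hbd₁ : LinBoundedBy F Fv) (hbd₂ : LinBoundedBy Fv F)
    (L : ℕ → ℝ)
    (hL : ∀ k : ℕ, 0 < k → IsGreatest {l : ℝ | 0 < l ∧ ¬ F l ≤ Fv (k : ℝ)} (L k)) :
    (∀ p k : ℕ, 0 < p → 0 < k → (p : ℝ) * L k ≤ L (p * k)) ∧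
    lamMax Fv F = sSup {x : ℝ | ∃ k : ℕ, 0 < k ∧ x = L k / k} ∧
    Tendsto (fun k : ℕ => L k / k) atTop (nhds (lamMax Fv F)) :=
  stmt3_general m F hF v hv Fv hFv hbd₁ L hL
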